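/- For distinct points m⁺, m⁻ on the parabola m₂ = m₁²/2, the jump cost (Σ(m⁺) − Σ(m⁻))·n = |m₁⁺ − m₁⁻|³ / (12√(1 + (1/4)(m₁⁺ + m₁⁻)²)) is strictly positive. -/

import Mathlib

/-! On the parabola `m₂ = m₁²/2` the flux is `Σ(m) = (m₁³/3, -m₁²/2)`. Writing `d = m₁⁺ - m₁⁻` and
`s = m₁⁺ + m₁⁻`, the jump is `m⁺ - m⁻ = d • (1, s/2)`, of length `|d| √(1 + s²/4)`, and
`(Σ(m⁺) - Σ(m⁻)) · (m⁺ - m⁻) = d²(((m₁⁺)² + m₁⁺m₁⁻ + (m₁⁻)²)/3 - s²/4) = d⁴/12`.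
Dividing by the length of the jump gives `|d|³ / (12 √(1 + s²/4))`, positive as soon as `d ≠ 0`. -/

lemma parabola_chord_length (a b : ℝ) :
    √((a - b) ^ 2 + (a ^ 2 / 2 - b ^ 2 / 2) ^ 2) = |a - b| * √(1 + 1 / 4 * (a + b) ^ 2) := by
  rw [← Real.sqrt_sq_eq_abs, ← Real.sqrt_mul (sq_nonneg _)]
  ring_nf

lemma parabola_flux_jump_dot_jump (a b : ℝ) :
    ((a * (a ^ 2 / 2) - a ^ 3 / 6) - (b * (b ^ 2 / 2) - b ^ 3 / 6)) * (a - b)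
        + ((-(a ^ 2) / 2) - (-(b ^ 2) / 2)) * (a ^ 2 / 2 - b ^ 2 / 2)
      = |a - b| ^ 4 / 12 := by
  rw [pow_abs, abs_of_nonneg (by positivity)]
  ring

lemma parabola_jump_cost_eq (a b : ℝ) :
    ((a * (a ^ 2 / 2) - a ^ 3 / 6) - (b * (b ^ 2 / 2) - b ^ 3 / 6))
          * ((a - b) / √((a - b) ^ 2 + (a ^ 2 / 2 - b ^ 2 / 2) ^ 2))
        + ((-(a ^ 2) / 2) - (-(b ^ 2) / 2))
          * ((a ^ 2 / 2 - b ^ 2 / 2) / √((a - b) ^ 2 + (a ^ 2 / 2 - b ^ 2 / 2) ^ 2))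
      = |a - b| ^ 3 / (12 * √(1 + 1 / 4 * (a + b) ^ 2)) := by
  rw [mul_div_assoc' _ (a - b), mul_div_assoc' _ (a ^ 2 / 2 - b ^ 2 / 2), ← add_div,
    parabola_flux_jump_dot_jump, parabola_chord_length]
  rcases eq_or_ne |a - b| 0 with h | h
  · simp [h]
  · field_simp

/-- The jump cost (Σ(m⁺) − Σ(m⁻))·n equals
|m₁⁺ − m₁⁻|³/(12√(1 + (1/4)(m₁⁺ + m₁⁻)²)) and is strictly positive. -/
theorem stmt_5 (mp1 mp2 mm1 mm2 p1 p2 n1 n2 : ℝ)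
    (hparp : mp2 = mp1 ^ 2 / 2) (hparm : mm2 = mm1 ^ 2 / 2)
    (hne : (mp1, mp2) ≠ (mm1, mm2))
    (hp1 : p1 = mp1 - mm1) (hp2 : p2 = mp2 - mm2)
    (hn1 : n1 = p1 / Real.sqrt (p1 ^ 2 + p2 ^ 2))
    (hn2 : n2 = p2 / Real.sqrt (p1 ^ 2 + p2 ^ 2)) :
    ((mp1 * mp2 - mp1 ^ 3 / 6) - (mm1 * mm2 - mm1 ^ 3 / 6)) * n1
        + ((-(mp1 ^ 2) / 2) - (-(mm1 ^ 2) / 2)) * n2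
      = |mp1 - mm1| ^ 3 / (12 * Real.sqrt (1 + (1 / 4) * (mp1 + mm1) ^ 2))
    ∧ 0 < ((mp1 * mp2 - mp1 ^ 3 / 6) - (mm1 * mm2 - mm1 ^ 3 / 6)) * n1
        + ((-(mp1 ^ 2) / 2) - (-(mm1 ^ 2) / 2)) * n2 := by
  subst hparp hparm hp1 hp2 hn1 hn2
  have hne₁ : mp1 - mm1 ≠ 0 := sub_ne_zero.mpr fun h => hne (by rw [h])
  have cost := parabola_jump_cost_eq mp1 mm1
  refine ⟨cost, cost ▸ ?_⟩
  have hd : 0 < |mp1 - mm1| := abs_pos.mpr hne₁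
  positivity
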